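/- arXiv:1211.4451 — 3 statements merged into one kernel-verified Lean document; each statement's English description precedes it below -/
import Mathlib

section
/- Let (Ḡ, j, p) be a central extension of a group G by ℝ and let s : G → Ḡ be a section of p with s(1) = 1, with bounded defect c and associated cochain Φ; let φ(ḡ) := lim_{n→∞} Φ(ḡⁿ)/n (which exists). Define b : G → ℝ by b(g) := φ(s(g)) and s₀ : G → Ḡ by s₀(g) := s(g)·j(b(g))⁻¹. Then s₀ is a section of p with s₀(1) = 1, and: (1) the function h : Ḡ → ℝ determined by ḡ = j(h(ḡ))·s₀(p(ḡ)) is equal to φ; (2) the defect c̄ of s₀ satisfies c̄(g₁,g₂) = c(g₁,g₂) − (b(g₂) − b(g₁g₂) + b(g₁)) for all g₁,g₂ ∈ G, with b bounded. -/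
/-!
Writing `x = s (p x) * j (Φ x)`, centrality of `j` gives `Φ (x * y) = Φ x + Φ y + c (p x) (p y)`,
so `Φ` is a quasimorphism with defect bounded by `sup |c|` and hence `|φ - Φ| ≤ sup |c|`.
Since `x` commutes with `j t`, also `φ (x * j t) = φ x + t`; applied to `x = s (p x) * j (Φ x)` this
gives `φ x = b (p x) + Φ x`, which is exactly `x = j (φ x) * s₀ (p x)`. As `Φ ∘ s = 0`, the bound on
`φ - Φ` bounds `b = φ ∘ s`, and the defect of `s₀` differs from that of `s` by the coboundary of `b`
because the correction factors `j (b g)⁻¹` are central.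
-/

open Filter Topology

section Quasimorphism

variable {M : Type*} [Monoid M] {f : M → ℝ} {k : ℝ}

theorem abs_map_pow_succ_sub_le (hf : ∀ x y, |f (x * y) - f x - f y| ≤ k) (x : M) (n : ℕ) :
    |f (x ^ (n + 1)) - (n + 1) * f x| ≤ n * k := by
  induction n with
  | zero => simp
  | succ n ih =>
    calc |f (x ^ (n + 1 + 1)) - (↑(n + 1) + 1) * f x|
        = |(f (x ^ (n + 1)) - (n + 1) * f x) + (f (x ^ (n + 1) * x) - f (x ^ (n + 1)) - f x)| := by
          rw [← pow_succ]; push_cast; ring_nf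
      _ ≤ n * k + k := (abs_add_le _ _).trans (add_le_add ih (hf _ _))
      _ = ↑(n + 1) * k := by push_cast; ring

theorem abs_sub_le_of_tendsto_map_pow_div (hf : ∀ x y, |f (x * y) - f x - f y| ≤ k) {x : M}
    {L : ℝ} (hL : Tendsto (fun n : ℕ => f (x ^ n) / n) atTop (𝓝 L)) : |L - f x| ≤ k := by
  have hk : 0 ≤ k := (abs_nonneg _).trans (hf 1 1)
  have hL' := (tendsto_add_atTop_iff_nat 1).2 hL
  refine le_of_tendsto (hL'.sub_const (f x)).abs (Eventually.of_forall fun n => ?_)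
  have hn : (0 : ℝ) < n + 1 := by positivity
  calc |f (x ^ (n + 1)) / ↑(n + 1) - f x| = |f (x ^ (n + 1)) - (n + 1) * f x| / (n + 1) := by
        rw [Nat.cast_succ, div_sub' hn.ne', abs_div, abs_of_pos hn]
    _ ≤ n * k / (n + 1) := by gcongr; exact abs_map_pow_succ_sub_le hf x n
    _ ≤ k := by rw [div_le_iff₀ hn]; nlinarith

theorem eq_add_of_tendsto_map_pow_div {z : M} {t : ℝ}
    (hz : ∀ y (n : ℕ), f (y * z ^ n) = f y + n * t) {x : M} (hxz : Commute x z) {L L' : ℝ}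
    (hL : Tendsto (fun n : ℕ => f (x ^ n) / n) atTop (𝓝 L))
    (hL' : Tendsto (fun n : ℕ => f ((x * z) ^ n) / n) atTop (𝓝 L')) : L' = L + t := by
  refine tendsto_nhds_unique hL' ((hL.add_const t).congr' ?_)
  filter_upwards [eventually_ne_atTop 0] with n hn
  rw [hxz.mul_pow, hz]
  field_simp

end Quasimorphism

section CentralExtension

variable {G Gb : Type*} [Group G] [Group Gb] {J : AddChar ℝ Gb} {p : Gb →* G} {s : G → Gb}
  {Φ : Gb → ℝ}

theorem cochain_eq_of_eq_mul (hJ : Function.Injective J) (hΦ : ∀ x, x = s (p x) * J (Φ x))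
    {x : Gb} {t : ℝ} (h : x = s (p x) * J t) : Φ x = t :=
  hJ (mul_left_cancel ((hΦ x).symm.trans h))

theorem cochain_apply_section (hJ : Function.Injective J) (hΦ : ∀ x, x = s (p x) * J (Φ x))
    (hs : ∀ g, p (s g) = g) (g : G) : Φ (s g) = 0 :=
  cochain_eq_of_eq_mul hJ hΦ (by rw [hs, AddChar.map_zero_eq_one, mul_one])

theorem cochain_mul_addChar (hJ : Function.Injective J) (hΦ : ∀ x, x = s (p x) * J (Φ x))
    (hpJ : ∀ t, p (J t) = 1) (x : Gb) (t : ℝ) : Φ (x * J t) = Φ x + t :=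
  cochain_eq_of_eq_mul hJ hΦ <| by
    rw [map_mul, hpJ, mul_one, AddChar.map_add_eq_mul, ← mul_assoc, ← hΦ]

theorem cochain_mul (hJ : Function.Injective J) (hJc : ∀ t, J t ∈ Subgroup.center Gb)
    (hΦ : ∀ x, x = s (p x) * J (Φ x)) (c : G → G → ℝ)
    (hc : ∀ g h, J (c g h) = s g * s h * (s (g * h))⁻¹) (x y : Gb) :
    Φ (x * y) = Φ x + Φ y + c (p x) (p y) := by
  have hcomm (g : Gb) (t : ℝ) : g * J t = J t * g := Subgroup.mem_center_iff.mp (hJc t) g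
  refine cochain_eq_of_eq_mul hJ hΦ ?_
  calc x * y = s (p x) * (J (Φ x) * s (p y)) * J (Φ y) := by
        conv_lhs => rw [hΦ x, hΦ y]
        group
    _ = s (p x) * s (p y) * J (Φ x + Φ y) := by
        rw [← hcomm, AddChar.map_add_eq_mul]; group
    _ = s (p (x * y)) * J (Φ x + Φ y + c (p x) (p y)) := by
        rw [mul_inv_eq_iff_eq_mul.mp (hc _ _).symm, mul_assoc, ← hcomm, mul_assoc,
          ← AddChar.map_add_eq_mul, map_mul]

theorem defect_mul_inv_addChar (hJc : ∀ t, J t ∈ Subgroup.center Gb) (c : G → G → ℝ)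
    (hc : ∀ g h, J (c g h) = s g * s h * (s (g * h))⁻¹) (β : G → ℝ) (g₁ g₂ : G) :
    s g₁ * (J (β g₁))⁻¹ * (s g₂ * (J (β g₂))⁻¹) * (s (g₁ * g₂) * (J (β (g₁ * g₂)))⁻¹)⁻¹ =
      J (c g₁ g₂ - (β g₂ - β (g₁ * g₂) + β g₁)) := by
  have hcomm (g : Gb) (t : ℝ) : g * J t = J t * g := Subgroup.mem_center_iff.mp (hJc t) g
  rw [mul_inv_rev, inv_inv]
  simp only [← AddChar.map_neg_eq_inv]
  calc s g₁ * J (-β g₁) * (s g₂ * J (-β g₂)) * (J (β (g₁ * g₂)) * (s (g₁ * g₂))⁻¹)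
      = s g₁ * (J (-β g₁) * s g₂) * J (-β g₂) * J (β (g₁ * g₂)) * (s (g₁ * g₂))⁻¹ := by group
    _ = s g₁ * s g₂ * (J (-β g₁ + -β g₂ + β (g₁ * g₂)) * (s (g₁ * g₂))⁻¹) := by
        rw [← hcomm, AddChar.map_add_eq_mul, AddChar.map_add_eq_mul]; group
    _ = J (c g₁ g₂) * J (-β g₁ + -β g₂ + β (g₁ * g₂)) := by
        rw [← hcomm, hc]; group
    _ = J (c g₁ g₂ - (β g₂ - β (g₁ * g₂) + β g₁)) := by
        rw [← AddChar.map_add_eq_mul]; ring_nf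

theorem homogenization_mul_addChar (hJ : Function.Injective J)
    (hJc : ∀ t, J t ∈ Subgroup.center Gb) (hΦ : ∀ x, x = s (p x) * J (Φ x))
    (hpJ : ∀ t, p (J t) = 1) {φ : Gb → ℝ}
    (hφ : ∀ x, Tendsto (fun n : ℕ => Φ (x ^ n) / n) atTop (𝓝 (φ x))) (x : Gb) (t : ℝ) :
    φ (x * J t) = φ x + t :=
  eq_add_of_tendsto_map_pow_div (z := J t)
    (fun y n => by rw [← AddChar.map_nsmul_eq_pow, cochain_mul_addChar hJ hΦ hpJ, nsmul_eq_mul])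
    (Subgroup.mem_center_iff.mp (hJc t) x) (hφ x) (hφ _)

end CentralExtension

theorem stmt_2_general {G Gb : Type*} [Group G] [Group Gb]
    (j : ℝ → Gb) (p : Gb →* G)
    (hj_hom : ∀ t u : ℝ, j (t + u) = j t * j u)
    (hj_inj : Function.Injective j)
    (hj_cent : ∀ t : ℝ, j t ∈ Subgroup.center Gb)
    (hker : ∀ x : Gb, p x = 1 ↔ ∃ t : ℝ, j t = x)
    (s : G → Gb) (hs : ∀ g : G, p (s g) = g) (hs1 : s 1 = 1)
    (c : G → G → ℝ) (hc : ∀ g h : G, j (c g h) = s g * s h * (s (g * h))⁻¹)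
    (hc_bdd : ∃ k : ℝ, ∀ g h : G, |c g h| ≤ k)
    (Φ : Gb → ℝ) (hΦ : ∀ x : Gb, x = s (p x) * j (Φ x))
    (φ : Gb → ℝ)
    (hφ : ∀ x : Gb, Filter.Tendsto (fun n : ℕ => Φ (x ^ n) / n) Filter.atTop (nhds (φ x)))
    (b : G → ℝ) (hb : ∀ g : G, b g = φ (s g))
    (s₀ : G → Gb) (hs₀ : ∀ g : G, s₀ g = s g * (j (b g))⁻¹) :
    (∀ g : G, p (s₀ g) = g) ∧ s₀ 1 = 1 ∧
    -- (1) the cochain `h` associated to `s₀` (determined by `x = j (h x) * s₀ (p x)`) is `φ`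
    (∀ h : Gb → ℝ, (∀ x : Gb, x = j (h x) * s₀ (p x)) → h = φ) ∧
    (∀ x : Gb, x = j (φ x) * s₀ (p x)) ∧
    -- (2) the defect of `s₀` is `c - db` with `b` bounded
    (∀ g₁ g₂ : G,
      s₀ g₁ * s₀ g₂ * (s₀ (g₁ * g₂))⁻¹ = j (c g₁ g₂ - (b g₂ - b (g₁ * g₂) + b g₁))) ∧
    (∃ k : ℝ, ∀ g : G, |b g| ≤ k) := by
  obtain ⟨k, hk⟩ := hc_bdd
  obtain ⟨J, rfl⟩ : ∃ J : AddChar ℝ Gb, ⇑J = j := ⟨⟨j, by simpa using hj_hom 0 0, hj_hom⟩, rfl⟩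
  have hpJ (t : ℝ) : p (J t) = 1 := (hker _).2 ⟨t, rfl⟩
  have hΦ_quasi (x y : Gb) : |Φ (x * y) - Φ x - Φ y| ≤ k := by
    rw [cochain_mul hj_inj hj_cent hΦ c hc]
    convert hk (p x) (p y) using 2
    ring
  have hφΦ (x : Gb) : |φ x - Φ x| ≤ k := abs_sub_le_of_tendsto_map_pow_div hΦ_quasi (hφ x)
  have hφ_eq (x : Gb) : φ x = b (p x) + Φ x := by
    conv_lhs => rw [hΦ x]
    rw [homogenization_mul_addChar hj_inj hj_cent hΦ hpJ hφ, hb]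
  have hφ_one : φ 1 = 0 := by
    have hΦ_one : Φ 1 = 0 := hs1 ▸ cochain_apply_section hj_inj hΦ hs 1
    exact tendsto_nhds_unique (hφ 1) (by simp [hΦ_one])
  have hs₀_decomp (x : Gb) : x = J (φ x) * s₀ (p x) := by
    rw [hs₀, hφ_eq, ← AddChar.map_neg_eq_inv, ← mul_assoc,
      ← (Subgroup.mem_center_iff.mp (hj_cent _) _), mul_assoc, ← AddChar.map_add_eq_mul,
      add_neg_cancel_comm]
    exact hΦ x
  refine ⟨fun g => ?_, ?_, fun h hh => funext fun x => ?_, hs₀_decomp, fun g₁ g₂ => ?_,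
    ⟨k, fun g => ?_⟩⟩
  · rw [hs₀, map_mul, map_inv, hpJ, hs, inv_one, mul_one]
  · rw [hs₀, hb, hs1, hφ_one, AddChar.map_zero_eq_one, inv_one, mul_one]
  · exact hj_inj (mul_right_cancel ((hh x).symm.trans (hs₀_decomp x)))
  · rw [hs₀, hs₀, hs₀]
    exact defect_mul_inv_addChar hj_cent c hc b g₁ g₂
  · simpa [hb, cochain_apply_section hj_inj hΦ hs] using hφΦ (s g)

/-- modifying the section `s` by the bounded cochain `b(g) = φ(s g)` yields a
section `s₀` whose associated cochain is the homogeneous quasimorphism `φ` and whose defect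
differs from `c` by the coboundary of the bounded function `b`. -/
theorem stmt_2 {G Gb : Type*} [Group G] [Group Gb]
    (j : ℝ → Gb) (p : Gb →* G)
    (hj_hom : ∀ t u : ℝ, j (t + u) = j t * j u)
    (hj_inj : Function.Injective j)
    (hj_cent : ∀ t : ℝ, j t ∈ Subgroup.center Gb)
    (hp_surj : Function.Surjective p)
    (hker : ∀ x : Gb, p x = 1 ↔ ∃ t : ℝ, j t = x)
    (s : G → Gb) (hs : ∀ g : G, p (s g) = g) (hs1 : s 1 = 1)
    (c : G → G → ℝ) (hc : ∀ g h : G, j (c g h) = s g * s h * (s (g * h))⁻¹)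
    (hc_bdd : ∃ k : ℝ, ∀ g h : G, |c g h| ≤ k)
    (Φ : Gb → ℝ) (hΦ : ∀ x : Gb, x = s (p x) * j (Φ x))
    (φ : Gb → ℝ)
    (hφ : ∀ x : Gb, Filter.Tendsto (fun n : ℕ => Φ (x ^ n) / n) Filter.atTop (nhds (φ x)))
    (b : G → ℝ) (hb : ∀ g : G, b g = φ (s g))
    (s₀ : G → Gb) (hs₀ : ∀ g : G, s₀ g = s g * (j (b g))⁻¹) :
    (∀ g : G, p (s₀ g) = g) ∧ s₀ 1 = 1 ∧
    -- (1) the cochain `h` associated to `s₀` (determined by `x = j (h x) * s₀ (p x)`) is `φ`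
    (∀ h : Gb → ℝ, (∀ x : Gb, x = j (h x) * s₀ (p x)) → h = φ) ∧
    (∀ x : Gb, x = j (φ x) * s₀ (p x)) ∧
    -- (2) the defect of `s₀` is `c - db` with `b` bounded
    (∀ g₁ g₂ : G,
      s₀ g₁ * s₀ g₂ * (s₀ (g₁ * g₂))⁻¹ = j (c g₁ g₂ - (b g₂ - b (g₁ * g₂) + b g₁))) ∧
    (∃ k : ℝ, ∀ g : G, |b g| ≤ k) :=
  stmt_2_general j p hj_hom hj_inj hj_cent hker s hs hs1 c hc hc_bdd Φ hΦ φ hφ b hb s₀ hs₀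
end

section
/- Let (Ḡ, j, p) be a central extension of a group G by ℝ and let s_x : G → Ḡ be a section of p (with s_x(1)=1) whose associated cochain φ : Ḡ → ℝ (determined by ḡ = s_x(p(ḡ))·j(φ(ḡ))) is homogeneous, i.e. φ(ḡⁿ) = n·φ(ḡ) for all ḡ ∈ Ḡ and n ∈ ℤ, and whose defect c_x is bounded. Then: (1) s_x(gⁿ) = (s_x(g))ⁿ for all g ∈ G and n ∈ ℤ; (2) s_x(g h g⁻¹) = s_x(g)·s_x(h)·s_x(g)⁻¹ for all g, h ∈ G; (3) for every z ∈ Z(G) and g ∈ G, s_x(z) ∈ Z(Ḡ) and s_x(gz) = s_x(g)·s_x(z); (4) every z̄ ∈ Z(Ḡ) satisfies z̄ = s_x(p(z̄))·j(φ(z̄)), and φ(z̄·ḡ) = φ(z̄) + φ(ḡ) for all z̄ ∈ Z(Ḡ), ḡ ∈ Ḡ. Consequently z̄ ↦ (φ(z̄), p(z̄)) is a group isomorphism from Z(Ḡ) onto ℝ × Z(G). -/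
/-!
The cochain `φ` is a quasimorphism: `φ (x * y) = φ x + φ y + c (p x) (p y)`, so its defect is
bounded by that of the section. A homogeneous quasimorphism is additive on commuting pairs and
invariant under conjugation, because both defects scale linearly under taking `n`-th powers while
staying bounded. An element of `Ḡ` is `s (g)` exactly when it lies over `g` and has cochain `0`;
with this characterisation the homogeneity gives (1), conjugation invariance gives (2), and (2)
applied to central `z` shows that `s (z)` commutes with the image of `s`, hence with all of `Ḡ`.
Additivity on commuting pairs then gives (3) and (4), and `z̄ ↦ (φ z̄, p z̄)` is inverse to
`(t, z) ↦ s (z) · j (t)`.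
-/

theorem eq_zero_of_forall_abs_nat_mul_le {d K : ℝ} (h : ∀ n : ℕ, |n * d| ≤ K) : d = 0 := by
  by_contra hd
  obtain ⟨n, hn⟩ := exists_nat_gt (K / |d|)
  have := h n
  rw [abs_mul, Nat.abs_cast] at this
  rw [div_lt_iff₀ (abs_pos.2 hd)] at hn
  linarith

theorem MonoidHom.mem_center_of_surjective {G H : Type*} [Group G] [Group H] {f : G →* H}
    (hf : Function.Surjective f) {z : G} (hz : z ∈ Subgroup.center G) :
    f z ∈ Subgroup.center H := by
  rw [Subgroup.mem_center_iff]
  intro h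
  obtain ⟨g, rfl⟩ := hf h
  rw [← map_mul, ← map_mul, Subgroup.mem_center_iff.mp hz g]

namespace Quasimorphism

variable {H : Type*} [Group H] {f : H → ℝ} {D : ℝ}

theorem map_mul_of_commute (hf : ∀ x y, |f (x * y) - f x - f y| ≤ D)
    (hhom : ∀ (x : H) (n : ℕ), f (x ^ n) = n * f x) {x y : H} (hxy : Commute x y) :
    f (x * y) = f x + f y := by
  suffices f (x * y) - f x - f y = 0 by linarith
  refine eq_zero_of_forall_abs_nat_mul_le (K := D) fun n => ?_
  have := hf (x ^ n) (y ^ n)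
  rwa [← hxy.mul_pow, hhom, hhom, hhom, ← mul_sub, ← mul_sub] at this

theorem map_conj (hf : ∀ x y, |f (x * y) - f x - f y| ≤ D)
    (hhom : ∀ (x : H) (n : ℕ), f (x ^ n) = n * f x) (x y : H) :
    f (y * x * y⁻¹) = f x := by
  have hf1 : f 1 = 0 := by simpa using hhom 1 0
  suffices f (y * x * y⁻¹) - f x = 0 by linarith
  refine eq_zero_of_forall_abs_nat_mul_le (K := 3 * D) fun n => ?_
  have h₁ := abs_le.mp (hf (y * x ^ n) y⁻¹)
  have h₂ := abs_le.mp (hf y (x ^ n))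
  have h₃ := abs_le.mp (hf y y⁻¹)
  rw [mul_inv_cancel, hf1] at h₃
  have hpow : f (y * x ^ n * y⁻¹) = n * f (y * x * y⁻¹) := by rw [← conj_pow, hhom]
  rw [hpow] at h₁
  rw [hhom] at h₂
  rw [abs_le]
  constructor <;> linarith

end Quasimorphism

section CentralExtension

variable {G Gb : Type*} [Group G] [Group Gb] {j : ℝ → Gb} {p : Gb →* G} {sx : G → Gb}
  {φ : Gb → ℝ}

theorem cochain_section_mul (hj_inj : Function.Injective j) (hpj : ∀ t, p (j t) = 1)
    (hsx : ∀ g, p (sx g) = g) (hφ : ∀ x, x = sx (p x) * j (φ x)) (g : G) (t : ℝ) :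
    φ (sx g * j t) = t := by
  have h := hφ (sx g * j t)
  rw [map_mul, hsx, hpj, mul_one] at h
  exact (hj_inj (mul_left_cancel h)).symm

theorem cochain_mul_s3 {cx : G → G → ℝ} (hj_hom : ∀ t u, j (t + u) = j t * j u)
    (hj_inj : Function.Injective j) (hj_cent : ∀ t, j t ∈ Subgroup.center Gb)
    (hpj : ∀ t, p (j t) = 1) (hsx : ∀ g, p (sx g) = g) (hφ : ∀ x, x = sx (p x) * j (φ x))
    (hcx : ∀ g h, j (cx g h) = sx g * sx h * (sx (g * h))⁻¹) (x y : Gb) :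
    φ (x * y) = φ x + φ y + cx (p x) (p y) := by
  have hcomm : ∀ t z, Commute (j t) z := fun t z =>
    (Subgroup.mem_center_iff.mp (hj_cent t) z).symm
  have hxy : x * y = sx (p x * p y) * j (φ x + φ y + cx (p x) (p y)) := calc
    x * y = sx (p x) * sx (p y) * (j (φ x) * j (φ y)) := by
      conv_lhs => rw [hφ x, hφ y]
      exact (hcomm _ _).mul_mul_mul_comm _ _
    _ = j (cx (p x) (p y)) * sx (p x * p y) * j (φ x + φ y) := by
      rw [hcx, inv_mul_cancel_right, hj_hom]
    _ = sx (p x * p y) * j (φ x + φ y + cx (p x) (p y)) := by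
      rw [(hcomm _ _).eq, mul_assoc, ← hj_hom, add_comm (cx _ _)]
  rw [hxy, cochain_section_mul hj_inj hpj hsx hφ]

theorem eq_section_iff (hj0 : j 0 = 1) (hj_inj : Function.Injective j) (hpj : ∀ t, p (j t) = 1)
    (hsx : ∀ g, p (sx g) = g) (hφ : ∀ x, x = sx (p x) * j (φ x)) (x : Gb) (g : G) :
    x = sx g ↔ p x = g ∧ φ x = 0 := by
  constructor
  · rintro rfl
    refine ⟨hsx g, ?_⟩
    simpa [hj0] using cochain_section_mul hj_inj hpj hsx hφ g 0
  · rintro ⟨rfl, h0⟩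
    rw [hφ x, h0, hj0, mul_one, hsx]

theorem section_mem_center (hj_cent : ∀ t, j t ∈ Subgroup.center Gb)
    (hφ : ∀ x, x = sx (p x) * j (φ x))
    (hsx_conj : ∀ g h, sx (g * h * g⁻¹) = sx g * sx h * (sx g)⁻¹) {z : G}
    (hz : z ∈ Subgroup.center G) : sx z ∈ Subgroup.center Gb := by
  refine Subgroup.mem_center_iff.mpr fun x => ?_
  have hcomm : Commute (sx (p x)) (sx z) := by
    rw [Commute, SemiconjBy, ← mul_inv_eq_iff_eq_mul, ← hsx_conj,
      Subgroup.mem_center_iff.mp hz, mul_inv_cancel_right]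
  rw [hφ x]
  exact hcomm.mul_left (Subgroup.mem_center_iff.mp (hj_cent _) _).symm

end CentralExtension

theorem stmt_3_general {G Gb : Type*} [Group G] [Group Gb]
    (j : ℝ → Gb) (p : Gb →* G)
    (hj_hom : ∀ t u : ℝ, j (t + u) = j t * j u)
    (hj_inj : Function.Injective j)
    (hj_cent : ∀ t : ℝ, j t ∈ Subgroup.center Gb)
    (hp_surj : Function.Surjective p)
    (hker : ∀ x : Gb, p x = 1 ↔ ∃ t : ℝ, j t = x)
    (sx : G → Gb) (hsx : ∀ g : G, p (sx g) = g)
    (φ : Gb → ℝ) (hφ : ∀ x : Gb, x = sx (p x) * j (φ x))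
    (hφ_hom : ∀ (x : Gb) (n : ℤ), φ (x ^ n) = n * φ x)
    (cx : G → G → ℝ) (hcx : ∀ g h : G, j (cx g h) = sx g * sx h * (sx (g * h))⁻¹)
    (hcx_bdd : ∃ k : ℝ, ∀ g h : G, |cx g h| ≤ k) :
    -- (1)
    (∀ (g : G) (n : ℤ), sx (g ^ n) = (sx g) ^ n) ∧
    -- (2)
    (∀ g h : G, sx (g * h * g⁻¹) = sx g * sx h * (sx g)⁻¹) ∧
    -- (3)
    (∀ z ∈ Subgroup.center G, sx z ∈ Subgroup.center Gb) ∧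
    (∀ (g : G), ∀ z ∈ Subgroup.center G, sx (g * z) = sx g * sx z) ∧
    -- (4)
    (∀ zb ∈ Subgroup.center Gb, zb = sx (p zb) * j (φ zb)) ∧
    (∀ zb ∈ Subgroup.center Gb, ∀ x : Gb, φ (zb * x) = φ zb + φ x) ∧
    -- consequence: `z̄ ↦ (φ z̄, p z̄)` is a group isomorphism `Z(Ḡ) ≃ ℝ × Z(G)`
    (∀ zb ∈ Subgroup.center Gb, p zb ∈ Subgroup.center G) ∧
    (∀ zb ∈ Subgroup.center Gb, ∀ wb ∈ Subgroup.center Gb,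
      φ (zb * wb) = φ zb + φ wb ∧ p (zb * wb) = p zb * p wb) ∧
    (∀ zb ∈ Subgroup.center Gb, ∀ wb ∈ Subgroup.center Gb,
      φ zb = φ wb → p zb = p wb → zb = wb) ∧
    (∀ (t : ℝ), ∀ g ∈ Subgroup.center G,
      ∃ zb ∈ Subgroup.center Gb, φ zb = t ∧ p zb = g) := by
  obtain ⟨k, hk⟩ := hcx_bdd
  have hj0 : j 0 = 1 := left_eq_mul.mp (by rw [← hj_hom, add_zero] : j 0 = j 0 * j 0)
  have hpj : ∀ t, p (j t) = 1 := fun t => (hker _).mpr ⟨t, rfl⟩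
  have hsec := eq_section_iff hj0 hj_inj hpj hsx hφ
  have hquasi : ∀ x y, |φ (x * y) - φ x - φ y| ≤ k := fun x y => by
    rw [cochain_mul_s3 hj_hom hj_inj hj_cent hpj hsx hφ hcx]
    convert hk (p x) (p y) using 2
    ring
  have hhom : ∀ (x : Gb) (n : ℕ), φ (x ^ n) = n * φ x := fun x n => by
    exact_mod_cast hφ_hom x n
  have hφ_mul_of_commute : ∀ {x y : Gb}, Commute x y → φ (x * y) = φ x + φ y :=
    Quasimorphism.map_mul_of_commute hquasi hhom
  have hφsx : ∀ g, φ (sx g) = 0 := fun g => ((hsec _ g).mp rfl).2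
  have hsx_zpow : ∀ (g : G) (n : ℤ), sx (g ^ n) = sx g ^ n := fun g n =>
    ((hsec _ _).mpr ⟨by rw [map_zpow, hsx], by rw [hφ_hom, hφsx, mul_zero]⟩).symm
  have hsx_conj : ∀ g h : G, sx (g * h * g⁻¹) = sx g * sx h * (sx g)⁻¹ := fun g h =>
    ((hsec _ _).mpr ⟨by simp [hsx], by rw [Quasimorphism.map_conj hquasi hhom, hφsx]⟩).symm
  have hsx_center : ∀ z ∈ Subgroup.center G, sx z ∈ Subgroup.center Gb :=
    fun z => section_mem_center hj_cent hφ hsx_conj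
  have hφ_center_mul : ∀ zb ∈ Subgroup.center Gb, ∀ x : Gb, φ (zb * x) = φ zb + φ x :=
    fun zb hzb x => hφ_mul_of_commute (Subgroup.mem_center_iff.mp hzb x).symm
  refine ⟨hsx_zpow, hsx_conj, hsx_center, fun g z hz => ?_, fun zb _ => hφ zb, hφ_center_mul,
    fun zb => MonoidHom.mem_center_of_surjective hp_surj,
    fun zb hzb wb _ => ⟨hφ_center_mul zb hzb wb, map_mul p zb wb⟩, ?_, ?_⟩
  · refine ((hsec _ _).mpr ⟨by rw [map_mul, hsx, hsx], ?_⟩).symm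
    rw [hφ_mul_of_commute (Subgroup.mem_center_iff.mp (hsx_center z hz) (sx g)), hφsx, hφsx,
      add_zero]
  · intro zb _ wb _ hφ' hp'
    rw [hφ zb, hφ wb, hφ', hp']
  · intro t g hg
    exact ⟨sx g * j t, Subgroup.mul_mem _ (hsx_center g hg) (hj_cent t),
      cochain_section_mul hj_inj hpj hsx hφ g t, by rw [map_mul, hsx, hpj, mul_one]⟩

/-- properties of a section `s_x` with homogeneous associated cochain `φ` and
bounded defect: equivariance properties of `s_x`, its behaviour on the centre, and the
induced isomorphism `Z(Ḡ) ≃ ℝ × Z(G)`. -/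
theorem stmt_3 {G Gb : Type*} [Group G] [Group Gb]
    (j : ℝ → Gb) (p : Gb →* G)
    (hj_hom : ∀ t u : ℝ, j (t + u) = j t * j u)
    (hj_inj : Function.Injective j)
    (hj_cent : ∀ t : ℝ, j t ∈ Subgroup.center Gb)
    (hp_surj : Function.Surjective p)
    (hker : ∀ x : Gb, p x = 1 ↔ ∃ t : ℝ, j t = x)
    (sx : G → Gb) (hsx : ∀ g : G, p (sx g) = g) (hsx1 : sx 1 = 1)
    (φ : Gb → ℝ) (hφ : ∀ x : Gb, x = sx (p x) * j (φ x))
    (hφ_hom : ∀ (x : Gb) (n : ℤ), φ (x ^ n) = n * φ x)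
    (cx : G → G → ℝ) (hcx : ∀ g h : G, j (cx g h) = sx g * sx h * (sx (g * h))⁻¹)
    (hcx_bdd : ∃ k : ℝ, ∀ g h : G, |cx g h| ≤ k) :
    -- (1)
    (∀ (g : G) (n : ℤ), sx (g ^ n) = (sx g) ^ n) ∧
    -- (2)
    (∀ g h : G, sx (g * h * g⁻¹) = sx g * sx h * (sx g)⁻¹) ∧
    -- (3)
    (∀ z ∈ Subgroup.center G, sx z ∈ Subgroup.center Gb) ∧
    (∀ (g : G), ∀ z ∈ Subgroup.center G, sx (g * z) = sx g * sx z) ∧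
    -- (4)
    (∀ zb ∈ Subgroup.center Gb, zb = sx (p zb) * j (φ zb)) ∧
    (∀ zb ∈ Subgroup.center Gb, ∀ x : Gb, φ (zb * x) = φ zb + φ x) ∧
    -- consequence: `z̄ ↦ (φ z̄, p z̄)` is a group isomorphism `Z(Ḡ) ≃ ℝ × Z(G)`
    (∀ zb ∈ Subgroup.center Gb, p zb ∈ Subgroup.center G) ∧
    (∀ zb ∈ Subgroup.center Gb, ∀ wb ∈ Subgroup.center Gb,
      φ (zb * wb) = φ zb + φ wb ∧ p (zb * wb) = p zb * p wb) ∧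
    (∀ zb ∈ Subgroup.center Gb, ∀ wb ∈ Subgroup.center Gb,
      φ zb = φ wb → p zb = p wb → zb = wb) ∧
    (∀ (t : ℝ), ∀ g ∈ Subgroup.center G,
      ∃ zb ∈ Subgroup.center Gb, φ zb = t ∧ p zb = g) :=
  stmt_3_general j p hj_hom hj_inj hj_cent hp_surj hker sx hsx φ hφ hφ_hom cx hcx hcx_bdd
end

section
/- Let G be a group. The following are equivalent: (i) every bounded 2-cocycle c : G × G → ℝ is the coboundary db of some bounded function b : G → ℝ (i.e. the second bounded cohomology H_b²(G,ℝ) vanishes); (ii) for all g, h ∈ G, the element m₂(g,h) of ℓ¹(G×G) belongs to the closure of the ℝ-linear span of B₂ (i.e. the class g₂ ∈ H_b²(G, H̄₂^{ℓ¹}(G,ℝ)) vanishes). -/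
noncomputable section

open scoped ENNReal

instance : Fact ((1 : ℝ≥0∞) ≤ 1) := ⟨le_rfl⟩

/-- Dirac element of `ℓ¹(G×G)`. -/
def dirac {G : Type*} [Group G] (x : G × G) : lp (fun _ : G × G => ℝ) 1 :=
  letI := Classical.decEq (G × G)
  lp.single 1 x 1

/-- `m(g) = Σ_{n≥1} 2⁻ⁿ · δ_{(g^{2^{n-1}}, g^{2^{n-1}})} ∈ ℓ¹(G×G)`. -/
def mm {G : Type*} [Group G] (g : G) : lp (fun _ : G × G => ℝ) 1 :=
  ∑' n : ℕ, ((1 : ℝ) / 2) ^ (n + 1) • dirac (g ^ 2 ^ n, g ^ 2 ^ n)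

/-- `m₂(g,h) = δ_{(g,h)} − m(g) + m(gh) − m(h) ∈ ℓ¹(G×G)`. -/
def m2 {G : Type*} [Group G] (g h : G) : lp (fun _ : G × G => ℝ) 1 :=
  dirac (g, h) - mm g + mm (g * h) - mm h

/-- The set of boundary elements of `ℓ¹(G×G)`. -/
def B2 (G : Type*) [Group G] : Set (lp (fun _ : G × G => ℝ) 1) :=
  {x | ∃ a b k : G, x = dirac (b, k) - dirac (a * b, k) + dirac (a, b * k) - dirac (a, b)}

/-- A bounded real 2-cocycle on a group `G` (normalized: vanishing when one argument is 1). -/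
def IsBounded2Cocycle {G : Type*} [Group G] (c : G → G → ℝ) : Prop :=
  (∃ k : ℝ, ∀ g h : G, |c g h| ≤ k) ∧
  (∀ g h k : G, c h k - c (g * h) k + c g (h * k) - c g h = 0) ∧
  (∀ g : G, c g 1 = 0) ∧ (∀ g : G, c 1 g = 0)

/-! By Hahn–Banach, `m₂(g,h)` lies in the closed span of `B₂` iff every functional `f` on
`ℓ¹(G×G)` that kills `B₂` kills `m₂(g,h)`. Such an `f` is the same as the bounded function
`c(x,y) = f(δ_{(x,y)})` satisfying the cocycle identity, i.e. a normalized bounded cocycle plus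
the constant `c(1,1)`. Pairing with `m(g)` recovers a bounded `b` from `db + κ` (the series
telescopes along `g, g², g⁴, …`), so `f ∘ m` is the canonical candidate primitive of `c`, and
`f(m₂(g,h)) = c(g,h) - d(f ∘ m)(g,h)` vanishes exactly when that candidate works. -/

theorem mem_closure_span_iff_forall_dual {E : Type*} [AddCommGroup E] [Module ℝ E]
    [TopologicalSpace E] [IsTopologicalAddGroup E] [ContinuousSMul ℝ E]
    [LocallyConvexSpace ℝ E] {s : Set E} {x : E} :
    x ∈ closure (Submodule.span ℝ s : Set E) ↔
      ∀ f : StrongDual ℝ E, (∀ y ∈ s, f y = 0) → f x = 0 := by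
  refine ⟨fun hx f hf => ?_, fun h => ?_⟩
  · have hspan : Submodule.span ℝ s ≤ f.ker := Submodule.span_le.2 hf
    exact closure_minimal hspan f.isClosed_ker hx
  · by_contra hx
    obtain ⟨f, u, hfu, hux⟩ := geometric_hahn_banach_closed_point
      (Submodule.span ℝ s).convex.closure isClosed_closure hx
    -- `f` is bounded above on a subspace, hence vanishes on it.
    have hf : ∀ y ∈ s, f y = 0 := by
      intro y hy
      by_contra hne
      have := hfu (((u + 1) / f y) • y)
        (subset_closure (Submodule.smul_mem _ _ (Submodule.subset_span hy)))
      rw [map_smul, smul_eq_mul, div_mul_cancel₀ _ hne] at this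
      linarith
    have hu : 0 < u := by simpa using hfu 0 (subset_closure (Submodule.zero_mem _))
    linarith [h f hf]

theorem hasSum_sub_succ {M : Type*} [AddCommGroup M] [TopologicalSpace M]
    [IsTopologicalAddGroup M] {u : ℕ → M} (hu : Summable u) :
    HasSum (fun n => u n - u (n + 1)) (u 0) := by
  have hsucc := (hasSum_nat_add_iff' 1).2 hu.hasSum
  simpa using hu.hasSum.sub hsucc

theorem hasSum_half_pow_succ : HasSum (fun n : ℕ => ((1 : ℝ) / 2) ^ (n + 1)) 1 := by
  simpa [pow_succ] using hasSum_geometric_two.mul_right ((1 : ℝ) / 2)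

theorem lp.exists_strongDual_single_eq {α : Type*} [DecidableEq α] {c : α → ℝ} {K : ℝ}
    (hc : ∀ i, |c i| ≤ K) :
    ∃ φ : StrongDual ℝ (lp (fun _ : α => ℝ) 1), ∀ i, φ (lp.single 1 i 1) = c i := by
  let cℓ : lp (fun _ : α => ℝ) ∞ := ⟨c, memℓp_infty ⟨K, by rintro _ ⟨i, rfl⟩; exact hc i⟩⟩
  refine ⟨lp.dualPairing ∞ 1 (fun _ => ContinuousLinearMap.mul ℝ ℝ) (K := 1)
    (fun _ => (ContinuousLinearMap.opNorm_mul_le ℝ ℝ).trans_eq NNReal.coe_one.symm) cℓ,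
    fun i => ?_⟩
  rw [lp.dualPairing_apply, tsum_eq_single i fun j hj => by simp [Pi.single_eq_of_ne hj]]
  simp [cℓ]

section Group

variable {G : Type*} [Group G]

theorem norm_dirac (x : G × G) : ‖dirac x‖ = 1 := by
  let := Classical.decEq (G × G)
  exact (lp.norm_single (p := 1) (E := fun _ : G × G => ℝ) one_pos x 1).trans norm_one

theorem exists_strongDual_dirac_eq {c : G × G → ℝ} {K : ℝ} (hc : ∀ x, |c x| ≤ K) :
    ∃ φ : StrongDual ℝ (lp (fun _ : G × G => ℝ) 1), ∀ x, φ (dirac x) = c x :=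
  letI := Classical.decEq (G × G)
  lp.exists_strongDual_single_eq hc

theorem norm_half_pow_smul_dirac (n : ℕ) (x : G × G) :
    ‖((1 : ℝ) / 2) ^ (n + 1) • dirac x‖ = ((1 : ℝ) / 2) ^ (n + 1) := by
  rw [norm_smul, norm_dirac, mul_one, Real.norm_eq_abs, abs_of_pos (by positivity)]

theorem hasSum_mm (g : G) :
    HasSum (fun n : ℕ => ((1 : ℝ) / 2) ^ (n + 1) • dirac (g ^ 2 ^ n, g ^ 2 ^ n)) (mm g) :=
  (Summable.of_norm_bounded hasSum_half_pow_succ.summable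
    fun n => (norm_half_pow_smul_dirac n _).le).hasSum

theorem norm_mm_le (g : G) : ‖mm g‖ ≤ 1 :=
  tsum_of_norm_bounded hasSum_half_pow_succ fun n => (norm_half_pow_smul_dirac n _).le

theorem map_mm_of_map_dirac_eq (f : StrongDual ℝ (lp (fun _ : G × G => ℝ) 1)) {b : G → ℝ}
    {K κ : ℝ} (hb : ∀ x, |b x| ≤ K)
    (hf : ∀ x y, f (dirac (x, y)) = b y - b (x * y) + b x + κ) (g : G) :
    f (mm g) = b g + κ := by
  set u : ℕ → ℝ := fun n => ((1 : ℝ) / 2) ^ n * b (g ^ 2 ^ n)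
  have hu : Summable u := by
    refine Summable.of_norm_bounded (summable_geometric_two.mul_left K) fun n => ?_
    rw [Real.norm_eq_abs, abs_mul, abs_of_pos (by positivity), mul_comm]
    exact mul_le_mul_of_nonneg_right (hb _) (by positivity)
  -- The coboundary part telescopes because `g ^ 2 ^ n * g ^ 2 ^ n = g ^ 2 ^ (n + 1)`.
  have hterm : ∀ n : ℕ, f (((1 : ℝ) / 2) ^ (n + 1) • dirac (g ^ 2 ^ n, g ^ 2 ^ n)) =
      (u n - u (n + 1)) + ((1 : ℝ) / 2) ^ (n + 1) * κ := by
    intro n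
    rw [map_smul, smul_eq_mul, hf, ← pow_add, ← two_mul, ← pow_succ']
    simp only [u]
    ring
  have hsum := (hasSum_sub_succ hu).add (hasSum_half_pow_succ.mul_right κ)
  rw [← funext hterm] at hsum
  simpa [u] using ((hasSum_mm g).mapL f).unique hsum

theorem isBounded2Cocycle_map_dirac_sub (f : StrongDual ℝ (lp (fun _ : G × G => ℝ) 1))
    (hf : ∀ y ∈ B2 G, f y = 0) :
    IsBounded2Cocycle fun g h => f (dirac (g, h)) - f (dirac (1, 1)) := by
  have hcoc : ∀ a b k : G, f (dirac (b, k)) - f (dirac (a * b, k)) + f (dirac (a, b * k)) -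
      f (dirac (a, b)) = 0 := fun a b k => by
    simpa only [map_sub, map_add] using hf _ ⟨a, b, k, rfl⟩
  refine ⟨⟨‖f‖ + |f (dirac (1, 1))|, fun g h => ?_⟩, fun a b k => ?_, fun g => ?_, fun g => ?_⟩
  · have hle : |f (dirac (g, h))| ≤ ‖f‖ := by
      simpa [norm_dirac] using f.le_opNorm (dirac (g, h))
    exact (abs_sub _ _).trans (by linarith)
  · linarith [hcoc a b k]
  · have h := hcoc g 1 1
    simp only [mul_one] at h
    linarith
  · have h := hcoc 1 1 g
    simp only [one_mul] at h
    linarith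

end Group

/-- `H_b²(G,ℝ) = 0` (every bounded 2-cocycle is the coboundary of a bounded
function) if and only if the class `g₂` vanishes (every `m₂(g,h)` lies in the closure of
the span of the boundaries `B₂`). -/
theorem stmt_11 {G : Type*} [Group G] :
    (∀ c : G → G → ℝ, IsBounded2Cocycle c →
      ∃ b : G → ℝ, (∃ k : ℝ, ∀ x : G, |b x| ≤ k) ∧
        ∀ g h : G, c g h = b h - b (g * h) + b g) ↔
    (∀ g h : G, m2 g h ∈
      closure ((Submodule.span ℝ (B2 G) : Submodule ℝ _) :
        Set (lp (fun _ : G × G => ℝ) 1))) := by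
  simp only [mem_closure_span_iff_forall_dual]
  constructor
  · intro hvanish g h f hf
    obtain ⟨b, ⟨K, hK⟩, hb⟩ := hvanish _ (isBounded2Cocycle_map_dirac_sub f hf)
    have hfb : ∀ x y, f (dirac (x, y)) = b y - b (x * y) + b x + f (dirac (1, 1)) :=
      fun x y => by linarith [hb x y]
    simp only [m2, map_sub, map_add, map_mm_of_map_dirac_eq f hK hfb, hfb g h]
    ring
  · rintro hm2 c ⟨⟨K, hK⟩, hcoc, -, -⟩
    obtain ⟨φ, hφ⟩ := exists_strongDual_dirac_eq (c := fun x => c x.1 x.2) fun x => hK x.1 x.2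
    have hB2 : ∀ y ∈ B2 G, φ y = 0 := by
      rintro _ ⟨a, b, k, rfl⟩
      simpa only [map_sub, map_add, hφ] using hcoc a b k
    refine ⟨fun g => φ (mm g), ⟨‖φ‖, fun g => ?_⟩, fun g h => ?_⟩
    · calc |φ (mm g)| ≤ ‖φ‖ * ‖mm g‖ := φ.le_opNorm _
        _ ≤ ‖φ‖ := mul_le_of_le_one_right (norm_nonneg _) (norm_mm_le g)
    · have := hm2 g h φ hB2
      simp only [m2, map_sub, map_add, hφ] at this
      linarith
end
end
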